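/- arXiv:2406.11378 — 5 statements merged into one kernel-verified Lean document; each statement's English description precedes it below -/
import Mathlib

section
/- Let n = (n_1, ..., n_k) be an integer sequence with n_j = 0 for some 1 < j < k. Then s^n_{k+1}(t) = -s^m_{k-1}(t), where m is the sequence (n_1, ..., n_{j-2}, n_{j-1} + n_{j+1}, n_{j+2}, ..., n_k) of length k-2 obtained by deleting n_j and merging its neighbors. -/
/-- n-Chebyshev polynomials: s 0 = 0, s 1 = 1, s_{k+2}(t) = n_{k+1} t s_{k+1}(t) - s_k(t)
(0-indexed sequence: the 1-indexed entry n_i is `n (i-1)`). -/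
def sChe (n : ℕ → ℤ) : ℕ → ℂ → ℂ
  | 0, _ => 0
  | 1, _ => 1
  | k + 2, t => (n k : ℂ) * t * sChe n (k + 1) t - sChe n k t

/-! With `a = j - 2`, the zero entry is `n (a + 1)`, so the recurrence gives
`s^n_{a+3} = -s^n_{a+1}`; one more step gives `s^n_{a+4} = -((n a + n (a + 2)) t s^n_{a+1} - s^n_a)`.
Since `m` agrees with `n` below `a`, these are `-s^m_{a+1}` and `-s^m_{a+2}`. From there on
both sequences obey the same three-term recurrence, `m (a + 1 + i) = n (a + 3 + i)`, so the
relation `s^n_{a+3+i} = -s^m_{a+1+i}` propagates to all `i`. -/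

namespace sChe

variable {n m : ℕ → ℤ} {t : ℂ}

theorem add_two (n : ℕ → ℤ) (k : ℕ) (t : ℂ) :
    sChe n (k + 2) t = (n k : ℂ) * t * sChe n (k + 1) t - sChe n k t :=
  rfl

theorem congr_of_eqOn {r : ℕ} (h : ∀ i, i + 2 ≤ r → n i = m i) :
    sChe n r t = sChe m r t := by
  induction r using Nat.strong_induction_on with
  | _ r ih =>
    match r with
    | 0 | 1 => rfl
    | k + 2 =>
      rw [add_two, add_two, h k le_rfl, ih (k + 1) (by omega) fun i hi => h i (by omega),
        ih k (by omega) fun i hi => h i (by omega)]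

theorem add_eq_mul_of_shift {p q : ℕ} (c : ℂ) (hnm : ∀ i, n (p + i) = m (q + i))
    (h₀ : sChe n p t = c * sChe m q t) (h₁ : sChe n (p + 1) t = c * sChe m (q + 1) t) (i : ℕ) :
    sChe n (p + i) t = c * sChe m (q + i) t := by
  induction i using Nat.twoStepInduction with
  | zero => exact h₀
  | one => exact h₁
  | more i ih₀ ih₁ =>
    rw [← add_assoc, ← add_assoc, add_two, add_two, add_assoc, add_assoc, ih₀, ih₁, hnm]
    ring

end sChe

theorem sChe_zero_entry_merge (n : ℕ → ℤ) (k j : ℕ) (h1 : 1 < j) (h2 : j < k)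
    (hz : n (j - 1) = 0) (t : ℂ) :
    sChe n (k + 1) t =
      - sChe (fun i => if i < j - 2 then n i
          else if i = j - 2 then n (j - 2) + n j else n (i + 2)) (k - 1) t := by
  obtain ⟨a, rfl⟩ : ∃ a, j = a + 2 := ⟨j - 2, by omega⟩
  obtain ⟨i, rfl⟩ : ∃ i, k = a + 2 + i := ⟨k - (a + 2), by omega⟩
  replace hz : n (a + 1) = 0 := hz
  simp only [Nat.add_sub_cancel]
  set m : ℕ → ℤ := fun i => if i < a then n i else if i = a then n a + n (a + 2) else n (i + 2)
  have hlow {r : ℕ} (hr : r ≤ a + 1) : sChe n r t = sChe m r t :=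
    sChe.congr_of_eqOn fun i hi => by simp only [m, if_pos (show i < a by omega)]
  have hma : m a = n a + n (a + 2) := by simp [m]
  have h₀ : sChe n (a + 3) t = -1 * sChe m (a + 1) t := by
    rw [sChe.add_two, hz, ← hlow le_rfl]
    simp
  have h₁ : sChe n (a + 3 + 1) t = -1 * sChe m (a + 1 + 1) t := by
    rw [sChe.add_two, h₀, sChe.add_two n a, sChe.add_two m a, hma, hlow le_rfl, hlow (by omega)]
    push_cast
    ring
  have htail (i : ℕ) : n (a + 3 + i) = m (a + 1 + i) := by
    simp only [m, if_neg (show ¬ a + 1 + i < a by omega), if_neg (show a + 1 + i ≠ a by omega)]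
    ring_nf
  rw [show a + 2 + i + 1 = a + 3 + i by omega, show a + 2 + i - 1 = a + 1 + i by omega,
    sChe.add_eq_mul_of_shift (-1) htail h₀ h₁, neg_one_mul]
end

section
/- For any integer sequence (n_1, ..., n_k), the identity s^{(n_1, ..., n_{k-1}, n_k)}_{k+1}(t) = (1/2) T^{(n_1, ..., n_{k-1}, 2n_k)}_k(t) holds, where T^m_k(t) := s^m_{k+1}(t) - s^m_{k-1}(t). -/
lemma sChe_congr (n m : ℕ → ℤ) (t : ℂ) :
    ∀ j, (∀ i, i + 2 ≤ j → n i = m i) → sChe n j t = sChe m j t := by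
  intro j
  induction j using Nat.strong_induction_on with
  | _ j ih =>
    match j with
    | 0 => intro _; rfl
    | 1 => intro _; rfl
    | j + 2 =>
      intro h
      have h1 : sChe n (j + 1) t = sChe m (j + 1) t :=
        ih (j + 1) (by omega) (fun i hi => h i (by omega))
      have h2 : sChe n j t = sChe m j t :=
        ih j (by omega) (fun i hi => h i (by omega))
      simp only [sChe, h1, h2, h j (le_refl _)]

theorem sChe_eq_half_T_double_last (n : ℕ → ℤ) (k : ℕ) (hk : 1 ≤ k) (t : ℂ) :
    sChe n (k + 1) t =
      (1 / 2 : ℂ) *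
        (sChe (fun i => if i = k - 1 then 2 * n (k - 1) else n i) (k + 1) t -
          sChe (fun i => if i = k - 1 then 2 * n (k - 1) else n i) (k - 1) t) := by
  obtain ⟨j, rfl⟩ : ∃ j, k = j + 1 := ⟨k - 1, by omega⟩
  set m : ℕ → ℤ := fun i => if i = j + 1 - 1 then 2 * n (j + 1 - 1) else n i with hm
  have hcongr : ∀ l, l ≤ j + 1 → sChe m l t = sChe n l t := by
    intro l hl
    exact sChe_congr m n t l (fun i hi => by simp [hm]; omega)
  have e1 : sChe m (j + 2) t = (m j : ℂ) * t * sChe m (j + 1) t - sChe m j t := rfl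
  have e2 : sChe n (j + 2) t = (n j : ℂ) * t * sChe n (j + 1) t - sChe n j t := rfl
  have hmj : (m j : ℂ) = 2 * (n j : ℂ) := by simp [hm]
  show sChe n (j + 2) t = (1 / 2 : ℂ) * (sChe m (j + 2) t - sChe m j t)
  rw [e1, e2, hmj, hcongr (j + 1) (by omega), hcongr j (by omega)]
  ring
end

section
/- (Euler identity specialization) For indices and entries c_1, c_2, ..., the identity K_{j-i}(c_{i+1},...,c_j) K_{l-j-1}(c_{j+1},...,c_{l-1}) = K_{j-i-1}(c_{i+1},...,c_{j-1}) K_{l-j-2}(c_{j+2},...,c_{l-1}) + K_{l-i-1}(c_{i+1},...,c_{l-1}) holds. -/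
/-- auxiliary continuant, head recursion (applied to reversed lists). -/
def contAux : List ℂ → ℂ
  | [] => 1
  | [c] => c
  | c :: d :: cs => c * contAux (d :: cs) - contAux cs

/-- Continuant K, satisfying K(c₁,…,cₙ) = cₙ K(c₁,…,cₙ₋₁) - K(c₁,…,cₙ₋₂). -/
def cont (l : List ℂ) : ℂ := contAux l.reverse

/-- auxiliary K⁺, head recursion (applied to reversed lists). -/
def contPlusAux : List ℂ → ℂ
  | [] => 1
  | [c] => c
  | c :: d :: cs => c * contPlusAux (d :: cs) + contPlusAux cs

/-- Continuant K⁺, satisfying K⁺(c₁,…,cₙ) = cₙ K⁺(c₁,…,cₙ₋₁) + K⁺(c₁,…,cₙ₋₂). -/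
def contPlus (l : List ℂ) : ℂ := contPlusAux l.reverse

/-- Continuant with an integer index (first k entries of the sequence c),
with the convention K₋₁ = 0. -/
noncomputable def contZ (c : ℕ → ℂ) (k : ℤ) : ℂ :=
  if k < 0 then 0 else cont (List.ofFn fun j : Fin k.toNat => c j.1)

/-!
Euler's splitting rule `K(A ++ x :: y :: B) = K(A ++ [x]) K(y :: B) - K(A) K(B)` holds because
both sides satisfy the three-term recurrence of the continuant in the last entry of `B`, and they
agree when `B` has length zero or one. The theorem is its instance
`A = (c_{i+1},…,c_{j-1})`, `x = c_j`, `y = c_{j+1}`, `B = (c_{j+2},…,c_{l-1})`; when `l = j + 1`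
the block `y :: B` is empty and the identity reduces to `K_0 = 1`, `K_{-1} = 0`.
-/

lemma contAux_cons_mul_contAux_concat (A : List ℂ) (x y : ℂ) : ∀ B : List ℂ,
    contAux (x :: A) * contAux (B ++ [y]) = contAux A * contAux B + contAux (B ++ y :: x :: A)
  | [] => by simp only [List.nil_append, contAux]; ring
  | [b] => by simp only [List.cons_append, List.nil_append, contAux]; ring
  | b₁ :: b₂ :: B => by
    have h₁ := contAux_cons_mul_contAux_concat A x y (b₂ :: B)
    have h₂ := contAux_cons_mul_contAux_concat A x y B
    simp only [List.cons_append, contAux] at h₁ h₂ ⊢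
    linear_combination b₁ * h₁ - h₂

theorem cont_concat_mul_cont_cons (A B : List ℂ) (x y : ℂ) :
    cont (A ++ [x]) * cont (y :: B) = cont A * cont B + cont (A ++ x :: y :: B) := by
  simpa [cont] using contAux_cons_mul_contAux_concat A.reverse x y B.reverse

lemma cont_nil : cont [] = 1 := rfl

lemma contZ_add_eq_cont_map_range' (c : ℕ → ℂ) (s n : ℕ) {k : ℤ} (hk : k = n) :
    contZ (fun m => c (s + m)) k = cont ((List.range' s n).map c) := by
  have hwindow : List.ofFn (fun k : Fin n => c (s + k)) = (List.range' s n).map c := by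
    apply List.ext_getElem <;> simp
  simp [contZ, hk, hwindow]

lemma contZ_of_neg (c : ℕ → ℂ) {k : ℤ} (hk : k < 0) : contZ c k = 0 := if_pos hk

theorem euler_identity_special (c : ℕ → ℂ) (i j l : ℕ) (h1 : i < j) (h2 : j < l) :
    contZ (fun m => c (i + 1 + m)) ((j : ℤ) - i) *
        contZ (fun m => c (j + 1 + m)) ((l : ℤ) - j - 1) =
      contZ (fun m => c (i + 1 + m)) ((j : ℤ) - i - 1) *
          contZ (fun m => c (j + 2 + m)) ((l : ℤ) - j - 2) +
        contZ (fun m => c (i + 1 + m)) ((l : ℤ) - i - 1) := by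
  obtain ⟨a, rfl⟩ : ∃ a, j = i + 1 + a := ⟨j - i - 1, by omega⟩
  rcases Nat.lt_or_ge (i + 1 + a + 1) l with hl | hl
  · obtain ⟨b, rfl⟩ : ∃ b, l = i + 1 + a + 2 + b := ⟨l - (i + 1 + a) - 2, by omega⟩
    rw [contZ_add_eq_cont_map_range' c (i + 1) (a + 1) (by omega),
      contZ_add_eq_cont_map_range' c (i + 1) a (by omega),
      contZ_add_eq_cont_map_range' c (i + 1) (a + (b + 2)) (by omega),
      contZ_add_eq_cont_map_range' c (i + 1 + a + 1) (b + 1) (by omega),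
      contZ_add_eq_cont_map_range' c (i + 1 + a + 2) b (by omega),
      List.range'_1_concat, List.range'_succ, ← List.range'_append_1, List.range'_succ,
      List.range'_succ]
    simp only [List.map_append, List.map_cons, List.map_nil]
    exact cont_concat_mul_cont_cons _ _ _ _
  · obtain rfl : l = i + 1 + a + 1 := by omega
    rw [contZ_add_eq_cont_map_range' c (i + 1) (a + 1) (by omega),
      contZ_add_eq_cont_map_range' c (i + 1) a (by omega),
      contZ_add_eq_cont_map_range' c (i + 1 + a + 1) 0 (by omega),
      contZ_of_neg _ (by omega), contZ_add_eq_cont_map_range' c (i + 1) (a + 1) (by omega)]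
    simp [cont_nil]
end

section
/- For any sequence c = (c_1, ..., c_n) and any x: K_{2n+1}(c_1,...,c_n, x, -c_n,...,-c_1) = (-1)^n x K_n(c_1,...,c_n)^2. -/
def contT : List ℂ → ℂ
  | [] => 0
  | _ :: cs => contAux cs

def contD : List ℂ → ℂ
  | [] => 0
  | c :: cs => contAux ((c :: cs).dropLast)

lemma contAux_cons (c : ℂ) (m : List ℂ) :
    contAux (c :: m) = c * contAux m - contT m := by
  cases m <;> simp [contAux, contT]

lemma contD_cons_cons (c d : ℂ) (a : List ℂ) :
    contD (c :: d :: a) = c * contD (d :: a) - contD a := by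
  cases a with
  | nil => simp [contD, contAux]
  | cons e a' =>
      show contAux (c :: d :: (e :: a').dropLast) = c * contAux (d :: (e :: a').dropLast) - contAux ((e :: a').dropLast)
      rw [contAux_cons]
      have : contT (d :: (e :: a').dropLast) = contAux ((e :: a').dropLast) := rfl
      rw [this]

lemma euler : ∀ (a b : List ℂ),
    contAux (a ++ b) = contAux a * contAux b - contD a * contT b
  | [], b => by simp [contAux, contD]
  | [c], b => by
      rw [List.singleton_append, contAux_cons]
      have h1 : contD [c] = 1 := rfl
      have h2 : contAux [c] = c := rfl
      rw [h1, h2]; ring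
  | c :: d :: a', b => by
      have h1 := euler (d :: a') b
      have h2 := euler a' b
      simp only [List.cons_append] at h1 ⊢
      rw [contAux_cons]
      have ht : contT (d :: (a' ++ b)) = contAux (a' ++ b) := rfl
      have ht2 : contAux (c :: d :: a') = c * contAux (d :: a') - contAux a' := rfl
      rw [ht, h1, h2, ht2, contD_cons_cons]
      ring

lemma contAux_neg : ∀ (l : List ℂ),
    contAux (l.map (fun c => -c)) = (-1 : ℂ) ^ l.length * contAux l ∧
    contT (l.map (fun c => -c)) = (-1 : ℂ) ^ (l.length + 1) * contT l
  | [] => by simp [contAux, contT]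
  | c :: cs => by
      obtain ⟨h1, h2⟩ := contAux_neg cs
      constructor
      · simp only [List.map_cons, contAux_cons, h1, h2, List.length_cons, pow_succ]
        ring
      · show contAux (cs.map (fun c => -c)) = _ * contT (c :: cs)
        rw [h1]
        show _ = _ * contAux cs
        rw [List.length_cons, pow_succ, pow_succ]
        ring

lemma contD_neg (l : List ℂ) :
    contD (l.map (fun c => -c)) = (-1 : ℂ) ^ (l.length + 1) * contD l := by
  cases l with
  | nil => simp [contD]
  | cons c cs =>
      show contAux (((c :: cs).map (fun c => -c)).dropLast) = _ * contAux ((c :: cs).dropLast)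
      rw [← List.map_dropLast, (contAux_neg _).1, List.length_dropLast, List.length_cons,
        Nat.add_sub_cancel, pow_succ, pow_succ]
      ring

lemma contD_concat (m : List ℂ) (a : ℂ) : contD (m ++ [a]) = contAux m := by
  cases m with
  | nil => rfl
  | cons h t =>
      show contAux ((h :: (t ++ [a])).dropLast) = _
      rw [← List.cons_append, List.dropLast_concat]

lemma pal : ∀ (l : List ℂ), contAux l.reverse = contAux l
  | [] => rfl
  | [c] => rfl
  | c :: e :: cs' => by
      have h1 := pal (e :: cs')
      have h2 := pal cs'
      rw [show (c :: e :: cs').reverse = (e :: cs').reverse ++ [c] by simp, euler]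
      have hD : contD ((e :: cs').reverse) = contAux cs' := by
        rw [show (e :: cs').reverse = cs'.reverse ++ [e] by simp, contD_concat, h2]
      rw [hD, h1]
      rw [show contAux [c] = c from rfl, show contT [c] = 1 from rfl,
        show contAux (c :: e :: cs') = c * contAux (e :: cs') - contAux cs' from rfl]
      ring

lemma contT_eq (m : List ℂ) (h : m ≠ []) : contT m = contAux m.tail := by
  cases m with
  | nil => exact absurd rfl h
  | cons c cs => rfl

lemma contT_reverse (l : List ℂ) : contT l.reverse = contD l := by
  cases l with
  | nil => rfl
  | cons c cs =>
      rw [contT_eq _ (by simp), List.tail_reverse, pal]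
      rfl

theorem cont_anti_palindrome (l : List ℂ) (x : ℂ) :
    cont (l ++ x :: (l.reverse.map fun c => -c)) =
      (-1 : ℂ) ^ l.length * x * (cont l) ^ 2 := by
  unfold cont
  rw [List.reverse_append, List.reverse_cons, List.map_reverse, List.reverse_reverse,
    List.append_assoc, List.singleton_append, euler, contAux_cons]
  have hT1 : contT (x :: l.reverse) = contAux l.reverse := rfl
  rw [hT1, (contAux_neg l).1, contD_neg, contT_reverse, pal, pow_succ]
  ring
end

section
/- Let X = [[1,1],[0,1]] and Y_\lambda = [[1,0],[\lambda,1]] in SL(2,C) with \lambda = -u^2, u nonzero. For any integer sequence n = (n_1, ..., n_{2m}), the word W(n) = X^{n_1} Y_\lambda^{n_2} X^{n_3} ... X^{n_{2m-1}} Y_\lambda^{n_{2m}} equals (-1)^{m-1} times the matrix [[-s^n_{2m+1}(u), (1/u) s^n_{2m}(u)], [-u s^{\sigma(n)}_{2m}(u), s^{\sigma(n)}_{2m-1}(u)]]. -/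
/-!
Both rows of the word, the second one divided by `u`, have the shape `(-s_{j+1}(u), s_j(u)/u)`
for the Chebyshev sequence of `n` (first row, `j = 2m`) or of its shift `σ(n)` (second row,
`j = 2m - 1`). Multiplying such a row on the right by `X^a Y_λ^b`, with `(a, b)` the next two
terms of the sequence, is two steps of the Chebyshev recurrence: it moves `j` to `j + 2` and
flips the sign.
-/

namespace Matrix

variable {R : Type*} [CommRing R]

theorem unipotent_upper_pow (c : R) (k : ℕ) :
    !![1, c; 0, 1] ^ k = !![1, (k : R) * c; 0, 1] := by
  induction k with
  | zero => simp [one_fin_two]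
  | succ k ih => simp [pow_succ, ih, add_mul, add_comm]

theorem unipotent_upper_zpow (c : R) (a : ℤ) :
    !![1, c; 0, 1] ^ a = !![1, (a : R) * c; 0, 1] := by
  obtain ⟨k, rfl | rfl⟩ := a.eq_nat_or_neg
  · simp [unipotent_upper_pow]
  · rw [zpow_neg_natCast, unipotent_upper_pow]
    exact inv_eq_left_inv (by simp [one_fin_two])

theorem unipotent_lower_zpow (c : R) (a : ℤ) :
    !![1, 0; c, 1] ^ a = !![1, 0; (a : R) * c, 1] := by
  have hT (x : R) : !![1, 0; x, 1] = !![1, x; 0, 1]ᵀ := by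
    ext i j; fin_cases i <;> fin_cases j <;> rfl
  rw [hT, hT, ← transpose_zpow, unipotent_upper_zpow]

end Matrix

open Matrix

noncomputable section

theorem sChe_add_two (n : ℕ → ℤ) (j : ℕ) (t : ℂ) :
    sChe n (j + 2) t = n j * t * sChe n (j + 1) t - sChe n j t := rfl

def xyStep (u : ℂ) (a b : ℤ) : Matrix (Fin 2) (Fin 2) ℂ :=
  !![1, 1; 0, 1] ^ a * !![1, 0; -u ^ 2, 1] ^ b

def chebRow (n : ℕ → ℤ) (u : ℂ) (j : ℕ) : Fin 2 → ℂ :=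
  ![-sChe n (j + 1) u, sChe n j u / u]

theorem chebRow_vecMul_xyStep (n : ℕ → ℤ) {u : ℂ} (hu : u ≠ 0) (j : ℕ) :
    chebRow n u j ᵥ* xyStep u (n j) (n (j + 1)) = -chebRow n u (j + 2) := by
  ext i
  fin_cases i <;>
    simp [chebRow, xyStep, unipotent_upper_zpow, unipotent_lower_zpow, vecMul, dotProduct,
      sChe_add_two] <;> field_simp <;> ring

/-- Shifted by one against the paper: `chebMatrix n u m` is its matrix for the word of
`m + 1` blocks, which avoids the truncated index `2 * m - 1`. -/
def chebMatrix (n : ℕ → ℤ) (u : ℂ) (m : ℕ) : Matrix (Fin 2) (Fin 2) ℂ :=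
  of ![chebRow n u (2 * m + 2), u • chebRow (fun j => n (j + 1)) u (2 * m + 1)]

theorem xyStep_eq_chebMatrix_zero (n : ℕ → ℤ) {u : ℂ} (hu : u ≠ 0) :
    xyStep u (n 0) (n 1) = chebMatrix n u 0 := by
  ext i j
  fin_cases i <;> fin_cases j <;>
    simp [chebMatrix, chebRow, xyStep, unipotent_upper_zpow, unipotent_lower_zpow, sChe, hu] <;>
    ring

theorem chebMatrix_mul_xyStep (n : ℕ → ℤ) {u : ℂ} (hu : u ≠ 0) (m : ℕ) :
    chebMatrix n u m * xyStep u (n (2 * (m + 1))) (n (2 * (m + 1) + 1)) =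
      -chebMatrix n u (m + 1) := by
  funext i
  fin_cases i
  · exact chebRow_vecMul_xyStep n hu (2 * m + 2)
  · change (u • chebRow _ u (2 * m + 1)) ᵥ* _ = -(u • chebRow _ u (2 * m + 3))
    rw [smul_vecMul, ← smul_neg]
    exact congrArg (u • ·) (chebRow_vecMul_xyStep (fun j => n (j + 1)) hu (2 * m + 1))

theorem prod_ofFn_xyStep (n : ℕ → ℤ) {u : ℂ} (hu : u ≠ 0) (m : ℕ) :
    (List.ofFn fun i : Fin (m + 1) => xyStep u (n (2 * i)) (n (2 * i + 1))).prod =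
      (-1 : ℂ) ^ m • chebMatrix n u m := by
  induction m with
  | zero => simpa using xyStep_eq_chebMatrix_zero n hu
  | succ m ih =>
    rw [List.ofFn_succ', List.prod_concat]
    simp only [Fin.val_castSucc, Fin.val_last]
    rw [ih, smul_mul, chebMatrix_mul_xyStep n hu, smul_neg, pow_succ, mul_neg_one, neg_smul]

theorem chebMatrix_eq (n : ℕ → ℤ) {u : ℂ} (hu : u ≠ 0) (m : ℕ) :
    chebMatrix n u m =
      !![-sChe n (2 * (m + 1) + 1) u, (1 / u) * sChe n (2 * (m + 1)) u;
         -u * sChe (fun j => n (j + 1)) (2 * (m + 1)) u,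
         sChe (fun j => n (j + 1)) (2 * (m + 1) - 1) u] := by
  ext i j
  fin_cases i <;> fin_cases j <;> simp [chebMatrix, chebRow, mul_add] <;> field_simp

end

theorem word_matrix_formula (u : ℂ) (hu : u ≠ 0) (m : ℕ) (hm : 1 ≤ m)
    (n : ℕ → ℤ) :
    (List.ofFn fun i : Fin m =>
        (!![1, 1; 0, 1] : Matrix (Fin 2) (Fin 2) ℂ) ^ (n (2 * i.1)) *
          (!![1, 0; -u ^ 2, 1] : Matrix (Fin 2) (Fin 2) ℂ) ^ (n (2 * i.1 + 1))).prod =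
      ((-1 : ℂ) ^ (m - 1)) •
        !![-sChe n (2 * m + 1) u, (1 / u) * sChe n (2 * m) u;
           -u * sChe (fun j => n (j + 1)) (2 * m) u,
           sChe (fun j => n (j + 1)) (2 * m - 1) u] := by
  obtain ⟨m, rfl⟩ := Nat.exists_eq_add_of_le' hm
  rw [Nat.add_sub_cancel, ← chebMatrix_eq n hu]
  exact prod_ofFn_xyStep n hu m
end
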